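/- arXiv:1706.06841 — 5 statements merged into one kernel-verified Lean document; each statement's English description precedes it below -/
import Mathlib

section
/- Let σ > 0, μ ∈ ℝ, δ > 0, Δ = √(μ² + 2δσ²), and W_δ(x) = (2/Δ) e^{−μx/σ²} sinh(xΔ/σ²). Then the function x ↦ W_δ(x)/W_δ'(x) is strictly increasing on [0, ∞); equivalently W_δ'(x)² > W_δ(x) W_δ''(x) for all x ≥ 0. -/
/-!
With `a = -μ/σ²`, `b = Δ/σ²` and `C = 2/Δ` we have `W x = C e^{ax} sinh (bx)` and `|a| < b`.
Hence `W' = C e^{ax} (a sinh (bx) + b cosh (bx)) > 0`, and `cosh² - sinh² = 1` gives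
`W'² - W W'' = (C b e^{ax})² > 0`, so `(W / W')' = (W'² - W W'') / W'²` is positive.
-/

open Real Set

theorem strictMono_div_deriv_of_mul_deriv_deriv_lt_sq {f : ℝ → ℝ} (hf : Differentiable ℝ f)
    (hf' : Differentiable ℝ (deriv f)) (hne : ∀ x, deriv f x ≠ 0)
    (h : ∀ x, f x * deriv (deriv f) x < deriv f x ^ 2) :
    StrictMono (fun x => f x / deriv f x) := by
  refine strictMono_of_deriv_pos fun x => ?_
  have hquot : HasDerivAt (fun y => f y / deriv f y)
      ((deriv f x * deriv f x - f x * deriv (deriv f) x) / deriv f x ^ 2) x :=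
    (hf x).hasDerivAt.div (hf' x).hasDerivAt (hne x)
  rw [hquot.deriv]
  exact div_pos (by nlinarith [h x]) (sq_pos_of_ne_zero (hne x))

noncomputable def expHyp (a b p q x : ℝ) : ℝ :=
  exp (a * x) * (p * sinh (b * x) + q * cosh (b * x))

theorem hasDerivAt_expHyp (a b p q x : ℝ) :
    HasDerivAt (expHyp a b p q) (expHyp a b (a * p + b * q) (a * q + b * p) x) x := by
  have hlin (c : ℝ) : HasDerivAt (fun y => c * y) c x := by
    simpa using (hasDerivAt_id x).const_mul c
  refine ((hlin a).exp.mul (((hlin b).sinh.const_mul p).add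
    ((hlin b).cosh.const_mul q))).congr_deriv ?_
  simp only [expHyp, Pi.add_apply]
  ring

theorem deriv_expHyp (a b p q : ℝ) :
    deriv (expHyp a b p q) = expHyp a b (a * p + b * q) (a * q + b * p) :=
  funext fun x => (hasDerivAt_expHyp a b p q x).deriv

theorem differentiable_expHyp (a b p q : ℝ) : Differentiable ℝ (expHyp a b p q) :=
  fun x => (hasDerivAt_expHyp a b p q x).differentiableAt

theorem sq_deriv_expHyp_sub_mul_deriv_deriv (a b p q x : ℝ) :
    deriv (expHyp a b p q) x ^ 2 - expHyp a b p q x * deriv (deriv (expHyp a b p q)) x =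
      b ^ 2 * (p ^ 2 - q ^ 2) * exp (a * x) ^ 2 := by
  simp only [deriv_expHyp, expHyp]
  linear_combination (b ^ 2 * (p ^ 2 - q ^ 2) * exp (a * x) ^ 2) * cosh_sq (b * x)

theorem mul_sinh_add_mul_cosh_pos {a b : ℝ} (hb : 0 < b) (hab : |a| ≤ b) (y : ℝ) :
    0 < a * sinh y + b * cosh y := by
  have habs : |sinh y| < cosh y :=
    abs_lt.2 ⟨by linarith [sinh_neg y ▸ cosh_neg y ▸ sinh_lt_cosh (-y)], sinh_lt_cosh y⟩
  calc 0 < b * (cosh y - |sinh y|) := mul_pos hb (sub_pos.2 habs)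
    _ ≤ b * cosh y - |a| * |sinh y| := by nlinarith [abs_nonneg (sinh y)]
    _ ≤ a * sinh y + b * cosh y := by rw [← abs_mul]; linarith [neg_abs_le (a * sinh y)]

theorem expHyp_pos {a b p q x : ℝ} (hq : 0 < q) (hp : |p| ≤ q) : 0 < expHyp a b p q x :=
  mul_pos (exp_pos _) (mul_sinh_add_mul_cosh_pos hq hp _)

/-- W_δ/W_δ' is strictly increasing on [0,∞); equivalently (W')² > W·W''. -/
theorem bm_scale_ratio_strictMono (μ σ δ : ℝ) (hσ : 0 < σ) (hδ : 0 < δ) :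
    let Δ := Real.sqrt (μ ^ 2 + 2 * δ * σ ^ 2)
    let W : ℝ → ℝ := fun x => (2 / Δ) * Real.exp (-(μ * x) / σ ^ 2) * Real.sinh (x * Δ / σ ^ 2)
    StrictMonoOn (fun x => W x / deriv W x) (Set.Ici (0 : ℝ)) ∧
      ∀ x : ℝ, 0 ≤ x → W x * deriv (deriv W) x < (deriv W x) ^ 2 := by
  intro Δ W
  have hΔ : 0 < Δ := sqrt_pos.2 (by positivity)
  set a := -μ / σ ^ 2
  set b := Δ / σ ^ 2
  set C := 2 / Δ
  have hb : 0 < b := by positivity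
  have hC : 0 < C := by positivity
  have hab : |a| ≤ b := by
    rw [abs_div, abs_neg, abs_of_pos (by positivity : (0 : ℝ) < σ ^ 2)]
    exact div_le_div_of_nonneg_right (abs_le_sqrt (by nlinarith)) (by positivity)
  have hW : W = expHyp a b C 0 := funext fun x => by
    simp only [W, expHyp, a, b, C]
    ring_nf
  have hW' : deriv W = expHyp a b (a * C) (b * C) := by
    rw [hW, deriv_expHyp, mul_zero, add_zero, mul_zero, zero_add]
  have hW'_pos (x : ℝ) : 0 < deriv W x := hW' ▸ expHyp_pos (mul_pos hb hC) (by
    rw [abs_mul, abs_of_pos hC]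
    exact mul_le_mul_of_nonneg_right hab hC.le)
  have hmul_lt_sq (x : ℝ) : W x * deriv (deriv W) x < deriv W x ^ 2 := by
    have hident := sq_deriv_expHyp_sub_mul_deriv_deriv a b C 0 x
    rw [← hW, zero_pow two_ne_zero, sub_zero] at hident
    have : 0 < b ^ 2 * C ^ 2 * exp (a * x) ^ 2 := by positivity
    linarith
  have hmono := strictMono_div_deriv_of_mul_deriv_deriv_lt_sq (hW ▸ differentiable_expHyp _ _ _ _)
    (hW' ▸ differentiable_expHyp _ _ _ _) (fun x => (hW'_pos x).ne') hmul_lt_sq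
  exact ⟨hmono.strictMonoOn _, fun x _ => hmul_lt_sq x⟩
end

section
/- Let W : [0,∞) → ℝ be continuous with exponential growth bound, and for r, δ ≥ 0 define W_δ via the series W_δ = Σ_{k≥0} δ^k W^{*,k+1}. Then for r ≠ δ, the convolution identity (W_r * W_δ)(x) = (W_r(x) − W_δ(x))/(r − δ) holds for all x ≥ 0, where (f*g)(x) = ∫₀^x f(x−y)g(y) dy. -/
/-!
If `|W| ≤ M` on `[-R, R]` then `|W^{*(k+1)}(x)| ≤ M^(k+1) |x|^k / k!` for `|x| ≤ R`, so the
series `W_q = Σ q^k W^{*(k+1)}` converges locally uniformly and may be integrated termwise; this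
gives the renewal equation `W_q = W + q (W_q * W)`. The convolution
`(f * g)(x) = ∫₀^x f(x - y) g(y) dy` is commutative, and associative on `[0, ∞)` by Fubini over a
triangle. Convolving `W_δ = W + δ (W * W_δ)` with `W_r` and then using `r (W_r * W) = W_r - W`
gives `r (W_r * W_δ) = (W_r - W) + δ (W_r * W_δ) - (W_δ - W)`, i.e.
`(r - δ) (W_r * W_δ) = W_r - W_δ`.
-/

open Real

/-- Iterated convolution powers on `[0,∞)`: `iterConv W k = W^{*,k+1}`. -/
noncomputable def iterConv (W : ℝ → ℝ) : ℕ → ℝ → ℝ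
  | 0 => W
  | (k + 1) => fun x => ∫ y in (0 : ℝ)..x, iterConv W k (x - y) * W y

open MeasureTheory Set Nat Interval

theorem integral_integral_swap_triangle {F : ℝ → ℝ → ℝ} (hF : Continuous (Function.uncurry F))
    {a b : ℝ} (hab : a ≤ b) :
    ∫ y in a..b, ∫ z in a..y, F y z = ∫ z in a..b, ∫ y in z..b, F y z := by
  set Φ : ℝ → ℝ → ℝ := fun y z => {p : ℝ × ℝ | p.2 ≤ p.1}.indicator (Function.uncurry F) (y, z)
  have hΦ : Integrable (Function.uncurry Φ)
      ((volume.restrict (Ioc a b)).prod (volume.restrict (Ioc a b))) := by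
    rw [Measure.prod_restrict, ← Measure.volume_eq_prod]
    refine IntegrableOn.indicator ?_ (measurableSet_le measurable_snd measurable_fst)
    exact (hF.continuousOn.integrableOn_compact (isCompact_Icc.prod isCompact_Icc)).mono_set
      (prod_mono Ioc_subset_Icc_self Ioc_subset_Icc_self)
  have hleft : ∀ y ∈ Ioc a b, ∫ z in a..y, F y z = ∫ z in Ioc a b, Φ y z := by
    intro y hy
    have : Φ y = (Iic y).indicator (F y) := by ext z; simp [Φ, indicator_apply]
    rw [this, integral_indicator measurableSet_Iic, Measure.restrict_restrict measurableSet_Iic,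
      Iic_inter_Ioc_of_le hy.2, intervalIntegral.integral_of_le hy.1.le]
  have hright : ∀ z ∈ Ioc a b, ∫ y in z..b, F y z = ∫ y in Ioc a b, Φ y z := by
    intro z hz
    have : (fun y => Φ y z) = (Ici z).indicator (fun y => F y z) := by
      ext y; simp [Φ, indicator_apply]
    have hset : Ici z ∩ Ioc a b = Icc z b := by
      ext y
      simp only [mem_inter_iff, mem_Ici, mem_Ioc, mem_Icc]
      grind
    rw [this, integral_indicator measurableSet_Ici, Measure.restrict_restrict measurableSet_Ici,
      hset, integral_Icc_eq_integral_Ioc, intervalIntegral.integral_of_le hz.2]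
  rw [intervalIntegral.integral_of_le hab, intervalIntegral.integral_of_le hab,
    setIntegral_congr_fun measurableSet_Ioc hleft, setIntegral_congr_fun measurableSet_Ioc hright]
  exact integral_integral_swap hΦ

noncomputable def laplaceConv (f g : ℝ → ℝ) (x : ℝ) : ℝ :=
  ∫ y in (0 : ℝ)..x, f (x - y) * g y

section LaplaceConv

variable {f g h : ℝ → ℝ}

theorem laplaceConv_comm (f g : ℝ → ℝ) : laplaceConv f g = laplaceConv g f := by
  ext x
  have := intervalIntegral.integral_comp_sub_left (fun y => g (x - y) * f y) (a := 0) (b := x) x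
  simp only [sub_sub_cancel, sub_zero, sub_self] at this
  rw [laplaceConv, laplaceConv, ← this]
  exact intervalIntegral.integral_congr fun y _ => mul_comm _ _

theorem continuous_laplaceConv (hf : Continuous f) (hg : Continuous g) :
    Continuous (laplaceConv f g) :=
  intervalIntegral.continuous_parametric_intervalIntegral_of_continuous
    (f := fun x y => f (x - y) * g y) (by fun_prop) continuous_id

theorem laplaceConv_add_right (hf : Continuous f) (hg : Continuous g) (hh : Continuous h)
    (x : ℝ) : laplaceConv f (g + h) x = laplaceConv f g x + laplaceConv f h x := by
  simp only [laplaceConv, Pi.add_apply, mul_add]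
  exact intervalIntegral.integral_add (Continuous.intervalIntegrable (by fun_prop) _ _)
    (Continuous.intervalIntegrable (by fun_prop) _ _)

theorem laplaceConv_sub_left (hf : Continuous f) (hg : Continuous g) (hh : Continuous h)
    (x : ℝ) : laplaceConv (f - g) h x = laplaceConv f h x - laplaceConv g h x := by
  simp only [laplaceConv, Pi.sub_apply, sub_mul]
  exact intervalIntegral.integral_sub (Continuous.intervalIntegrable (by fun_prop) _ _)
    (Continuous.intervalIntegrable (by fun_prop) _ _)

theorem laplaceConv_smul_left (c : ℝ) (f g : ℝ → ℝ) (x : ℝ) :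
    laplaceConv (c • f) g x = c * laplaceConv f g x := by
  simp only [laplaceConv, Pi.smul_apply, smul_eq_mul, mul_assoc]
  exact intervalIntegral.integral_const_mul _ _

theorem laplaceConv_smul_right (c : ℝ) (f g : ℝ → ℝ) (x : ℝ) :
    laplaceConv f (c • g) x = c * laplaceConv f g x := by
  simp only [laplaceConv, Pi.smul_apply, smul_eq_mul, mul_left_comm _ c]
  exact intervalIntegral.integral_const_mul _ _

theorem laplaceConv_assoc (hf : Continuous f) (hg : Continuous g) (hh : Continuous h) {x : ℝ}
    (hx : 0 ≤ x) :
    laplaceConv f (laplaceConv g h) x = laplaceConv (laplaceConv f g) h x := by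
  have hinner : ∀ z,
      ∫ y in z..x, f (x - y) * (g (y - z) * h z) = laplaceConv f g (x - z) * h z := by
    intro z
    simp only [← mul_assoc, intervalIntegral.integral_mul_const, laplaceConv]
    rw [← sub_self z, ← intervalIntegral.integral_comp_sub_right (fun u => f (x - z - u) * g u)]
    simp only [sub_sub_sub_cancel_right]
  calc laplaceConv f (laplaceConv g h) x
      = ∫ y in 0..x, ∫ z in 0..y, f (x - y) * (g (y - z) * h z) := by
        simp only [laplaceConv, intervalIntegral.integral_const_mul]
    _ = ∫ z in 0..x, ∫ y in z..x, f (x - y) * (g (y - z) * h z) :=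
        integral_integral_swap_triangle (F := fun y z => f (x - y) * (g (y - z) * h z))
          (by fun_prop) hx
    _ = laplaceConv (laplaceConv f g) h x := by simp only [hinner, laplaceConv]

end LaplaceConv

section ScaleFunction

variable {W : ℝ → ℝ}

theorem iterConv_succ (k : ℕ) : iterConv W (k + 1) = laplaceConv (iterConv W k) W :=
  rfl

theorem continuous_iterConv (hW : Continuous W) (k : ℕ) : Continuous (iterConv W k) := by
  induction k with
  | zero => exact hW
  | succ k ih => exact continuous_laplaceConv ih hW

theorem abs_iterConv_le {R M : ℝ} (hM : ∀ y, |y| ≤ R → |W y| ≤ M) (k : ℕ)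
    {x : ℝ} (hx : |x| ≤ R) : |iterConv W k x| ≤ M ^ (k + 1) * |x| ^ k / k ! := by
  induction k generalizing x with
  | zero => simpa [iterConv] using hM x hx
  | succ k ih =>
    have hpt : ∀ y ∈ Ι 0 x, ‖iterConv W k (x - y) * W y‖ ≤ M ^ (k + 2) / k ! * |y - x| ^ k := by
      intro y hy
      have hy' := uIoc_subset_uIcc hy
      have hxy : |x - y| ≤ |x| := by simpa using abs_sub_right_of_mem_uIcc hy'
      have hy0 : |y| ≤ |x| := by simpa using abs_sub_left_of_mem_uIcc hy'
      calc ‖iterConv W k (x - y) * W y‖ = |iterConv W k (x - y)| * |W y| := abs_mul _ _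
        _ ≤ M ^ (k + 1) * |x - y| ^ k / k ! * M :=
          mul_le_mul (ih (hxy.trans hx)) (hM y (hy0.trans hx)) (abs_nonneg _)
            ((abs_nonneg _).trans (ih (hxy.trans hx)))
        _ = M ^ (k + 2) / k ! * |y - x| ^ k := by rw [abs_sub_comm]; ring
    calc |iterConv W (k + 1) x|
        ≤ ∫ y in Ι 0 x, M ^ (k + 2) / k ! * |y - x| ^ k := by
          rw [iterConv_succ, laplaceConv, ← Real.norm_eq_abs,
            intervalIntegral.norm_intervalIntegral_eq]
          exact norm_integral_le_of_norm_le (Continuous.integrableOn_uIoc (by fun_prop))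
            ((ae_restrict_mem measurableSet_uIoc).mono hpt)
      _ = M ^ (k + 1 + 1) * |x| ^ (k + 1) / (k + 1) ! := by
          rw [integral_const_mul, uIoc_comm, integral_pow_abs_sub_uIoc, zero_sub, abs_neg,
            factorial_succ]
          push_cast
          field_simp

theorem abs_pow_mul_iterConv_le {R M : ℝ} (hM : ∀ y, |y| ≤ R → |W y| ≤ M) (q : ℝ) (k : ℕ)
    {x : ℝ} (hx : |x| ≤ R) : |q ^ k * iterConv W k x| ≤ M * ((|q| * M * R) ^ k / k !) := by
  have hM0 : 0 ≤ M := (abs_nonneg _).trans (hM 0 (by simpa using (abs_nonneg x).trans hx))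
  calc |q ^ k * iterConv W k x| ≤ |q| ^ k * (M ^ (k + 1) * |x| ^ k / k !) := by
        rw [abs_mul, abs_pow]
        exact mul_le_mul_of_nonneg_left (abs_iterConv_le hM k hx) (by positivity)
    _ ≤ |q| ^ k * (M ^ (k + 1) * R ^ k / k !) := by gcongr
    _ = M * ((|q| * M * R) ^ k / k !) := by ring

theorem exists_forall_abs_le_of_continuous (hW : Continuous W) (R : ℝ) :
    ∃ M, ∀ y, |y| ≤ R → |W y| ≤ M := by
  obtain ⟨M, hM⟩ := (isCompact_Icc (a := -R) (b := R)).exists_bound_of_continuousOn hW.continuousOn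
  exact ⟨M, fun y hy => hM y (abs_le.mp hy)⟩

theorem summable_pow_mul_iterConv (hW : Continuous W) (q x : ℝ) :
    Summable fun k => q ^ k * iterConv W k x := by
  obtain ⟨M, hM⟩ := exists_forall_abs_le_of_continuous hW |x|
  exact Summable.of_norm_bounded ((Real.summable_pow_div_factorial _).mul_left M)
    fun k => abs_pow_mul_iterConv_le hM q k le_rfl

noncomputable def scaleFun (W : ℝ → ℝ) (q x : ℝ) : ℝ := ∑' k, q ^ k * iterConv W k x

theorem continuous_scaleFun (hW : Continuous W) (q : ℝ) : Continuous (scaleFun W q) := by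
  refine continuous_iff_continuousAt.mpr fun x => ?_
  obtain ⟨M, hM⟩ := exists_forall_abs_le_of_continuous hW (|x| + 1)
  have hon : ContinuousOn (scaleFun W q) (Icc (-(|x| + 1)) (|x| + 1)) :=
    continuousOn_tsum (fun k => ((continuous_iterConv hW k).const_mul _).continuousOn)
      ((Real.summable_pow_div_factorial _).mul_left M)
      fun k y hy => abs_pow_mul_iterConv_le hM q k (abs_le.mpr hy)
  exact hon.continuousAt (Icc_mem_nhds (by linarith [neg_abs_le x]) (by linarith [le_abs_self x]))

theorem hasSum_pow_mul_iterConv_succ (hW : Continuous W) (q x : ℝ) :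
    HasSum (fun k => q ^ k * iterConv W (k + 1) x) (laplaceConv (scaleFun W q) W x) := by
  obtain ⟨M, hM⟩ := exists_forall_abs_le_of_continuous hW |x|
  have hterm : ∀ k,
      ∫ y in 0..x, q ^ k * iterConv W k (x - y) * W y = q ^ k * iterConv W (k + 1) x := fun k => by
    simp only [mul_assoc, intervalIntegral.integral_const_mul, iterConv_succ, laplaceConv]
  simp only [← hterm]
  refine intervalIntegral.hasSum_integral_of_dominated_convergence
    (fun k _ => M * ((|q| * M * |x|) ^ k / k !) * M)
    (fun k => Continuous.aestronglyMeasurable (by have := continuous_iterConv hW k; fun_prop))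
    (fun k => ae_of_all _ fun y hy => ?_)
    (ae_of_all _ fun _ _ => ((Real.summable_pow_div_factorial _).mul_left M).mul_right M)
    intervalIntegrable_const
    (ae_of_all _ fun y _ => ((summable_pow_mul_iterConv hW q (x - y)).hasSum.mul_right (W y)))
  have hy' := uIoc_subset_uIcc hy
  have hxy : |x - y| ≤ |x| := by simpa using abs_sub_right_of_mem_uIcc hy'
  have hy0 : |y| ≤ |x| := by simpa using abs_sub_left_of_mem_uIcc hy'
  rw [Real.norm_eq_abs, abs_mul]
  exact mul_le_mul (abs_pow_mul_iterConv_le hM q k hxy) (hM y hy0) (abs_nonneg _)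
    ((abs_nonneg _).trans (abs_pow_mul_iterConv_le hM q k hxy))

theorem scaleFun_eq_add_mul_laplaceConv (hW : Continuous W) (q x : ℝ) :
    scaleFun W q x = W x + q * laplaceConv (scaleFun W q) W x := by
  have h : HasSum (fun k => q ^ (k + 1) * iterConv W (k + 1) x)
      (q * laplaceConv (scaleFun W q) W x) :=
    ((hasSum_pow_mul_iterConv_succ hW q x).mul_left q).congr_fun fun k => by ring
  refine (((hasSum_nat_add_iff' 1).mp ?_).tsum_eq : ∑' k, q ^ k * iterConv W k x = _)
  simpa [iterConv] using h

theorem sub_mul_laplaceConv_scaleFun (hW : Continuous W) (r δ : ℝ) {x : ℝ} (hx : 0 ≤ x) :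
    (r - δ) * laplaceConv (scaleFun W r) (scaleFun W δ) x = scaleFun W r x - scaleFun W δ x := by
  set Sr := scaleFun W r
  set Sδ := scaleFun W δ
  have hSr : Continuous Sr := continuous_scaleFun hW r
  have hSδ : Continuous Sδ := continuous_scaleFun hW δ
  have hrenew_r : r • laplaceConv Sr W = Sr - W := by
    ext y; simp [Sr, scaleFun_eq_add_mul_laplaceConv hW r y]
  have hrenew_δ : Sδ = W + δ • laplaceConv W Sδ := by
    ext y; simp [Sδ, scaleFun_eq_add_mul_laplaceConv hW δ y, laplaceConv_comm W]
  have h1 : laplaceConv Sr Sδ x = laplaceConv Sr W x + δ * laplaceConv Sr (laplaceConv W Sδ) x := by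
    conv_lhs => rw [hrenew_δ]
    rw [laplaceConv_add_right hSr hW ((continuous_laplaceConv hW hSδ).const_smul δ),
      laplaceConv_smul_right]
  have h2 : r * laplaceConv Sr (laplaceConv W Sδ) x = laplaceConv Sr Sδ x - laplaceConv W Sδ x := by
    rw [laplaceConv_assoc hSr hW hSδ hx, ← laplaceConv_smul_left, hrenew_r,
      laplaceConv_sub_left hSr hW hSδ]
  have h3 := scaleFun_eq_add_mul_laplaceConv hW r x
  have h4 := scaleFun_eq_add_mul_laplaceConv hW δ x
  rw [laplaceConv_comm] at h4
  linear_combination r * h1 + δ * h2 - h3 + h4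

end ScaleFunction

theorem scale_convolution_identity_general (W : ℝ → ℝ) (hW : Continuous W)
    (r δ : ℝ) (hne : r ≠ δ) :
    let Wq : ℝ → ℝ → ℝ := fun q x => ∑' k : ℕ, q ^ k * iterConv W k x
    ∀ x : ℝ, 0 ≤ x →
      (∫ y in (0 : ℝ)..x, Wq r (x - y) * Wq δ y) = (Wq r x - Wq δ x) / (r - δ) := by
  intro Wq x hx
  rw [eq_div_iff (sub_ne_zero.mpr hne), mul_comm]
  exact sub_mul_laplaceConv_scaleFun hW r δ hx

/-- Convolution identity `W_r * W_δ = (W_r − W_δ)/(r − δ)` for the scale functions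
defined by the series `W_q = Σ q^k W^{*,k+1}`. -/
theorem scale_convolution_identity (W : ℝ → ℝ) (hW : Continuous W)
    (C α : ℝ) (hbd : ∀ x : ℝ, 0 ≤ x → |W x| ≤ C * Real.exp (α * x))
    (r δ : ℝ) (hr : 0 ≤ r) (hδ : 0 ≤ δ) (hne : r ≠ δ) :
    let Wq : ℝ → ℝ → ℝ := fun q x => ∑' k : ℕ, q ^ k * iterConv W k x
    ∀ x : ℝ, 0 ≤ x →
      (∫ y in (0 : ℝ)..x, Wq r (x - y) * Wq δ y) = (Wq r x - Wq δ x) / (r - δ) :=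
  scale_convolution_identity_general W hW r δ hne
end

section
/- Let σ > 0, μ ∈ ℝ, δ ≥ 0, γ = 2μ/σ², Δ = √(μ² + 2δσ²) > 0, κ(θ) = μθ + σ²θ²/2, and W_δ(x) = (2/Δ) e^{−μx/σ²} sinh(xΔ/σ²). Define Z_δ(x, θ) = e^{θx} + (δ − κ(θ)) ∫₀^x e^{θ(x−y)} W_δ(y) dy and Z_δ(x) = Z_δ(x, 0). Then for all x ≥ 0 and θ ∈ ℝ: Z_δ(x, θ) = Z_δ(x) + θ (σ²/2) W_δ(x). -/
open Real

lemma integral_exp_mul' (c x : ℝ) (hc : c ≠ 0) :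
    ∫ y in (0:ℝ)..x, Real.exp (c * y) = (Real.exp (c * x) - 1) / c := by
  rw [intervalIntegral.integral_comp_mul_left Real.exp hc]
  simp [smul_eq_mul, mul_comm, div_eq_inv_mul]

lemma bm_Z_closed_form (μ σ δ : ℝ) (hσ : 0 < σ) (Δ : ℝ) (hΔ : 0 < Δ)
    (hΔ2 : Δ ^ 2 = μ ^ 2 + 2 * δ * σ ^ 2) (x θ : ℝ) :
    Real.exp (θ * x) + (δ - (μ * θ + σ ^ 2 * θ ^ 2 / 2)) *
      ∫ y in (0:ℝ)..x, Real.exp (θ * (x - y)) *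
        ((2 / Δ) * Real.exp (-(μ * y) / σ ^ 2) * Real.sinh (y * Δ / σ ^ 2)) =
    (σ ^ 2 / (2 * Δ)) * ((θ - (-Δ - μ) / σ ^ 2) * Real.exp ((Δ - μ) / σ ^ 2 * x)
      - (θ - (Δ - μ) / σ ^ 2) * Real.exp ((-Δ - μ) / σ ^ 2 * x)) := by
  have hσ2 : (σ:ℝ) ^ 2 ≠ 0 := pow_ne_zero 2 hσ.ne'
  have hΔ0 : Δ ≠ 0 := hΔ.ne'
  set a : ℝ := (Δ - μ) / σ ^ 2 with ha
  set b : ℝ := (-Δ - μ) / σ ^ 2 with hb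
  have hfac : δ - (μ * θ + σ ^ 2 * θ ^ 2 / 2) = -(σ ^ 2 / 2) * (θ - a) * (θ - b) := by
    rw [ha, hb]
    field_simp
    ring_nf
    nlinarith [hΔ2]
  have hab2 : σ ^ 2 / (2 * Δ) * (a - b) = 1 := by
    rw [ha, hb]
    field_simp
    ring
  by_cases hθa : θ = a
  · have h0 : δ - (μ * θ + σ ^ 2 * θ ^ 2 / 2) = 0 := by rw [hfac, hθa]; ring
    rw [h0, zero_mul, add_zero, hθa]
    linear_combination (-Real.exp (a * x)) * hab2
  · by_cases hθb : θ = b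
    · have h0 : δ - (μ * θ + σ ^ 2 * θ ^ 2 / 2) = 0 := by rw [hfac, hθb]; ring
      rw [h0, zero_mul, add_zero, hθb]
      linear_combination (-Real.exp (b * x)) * hab2
    · have h1 : a - θ ≠ 0 := sub_ne_zero.mpr (Ne.symm hθa)
      have h2 : b - θ ≠ 0 := sub_ne_zero.mpr (Ne.symm hθb)
      have hW : ∀ y : ℝ, Real.exp (θ * (x - y)) *
          ((2 / Δ) * Real.exp (-(μ * y) / σ ^ 2) * Real.sinh (y * Δ / σ ^ 2)) =
          (1 / Δ) * (Real.exp (θ * x) * Real.exp ((a - θ) * y)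
            - Real.exp (θ * x) * Real.exp ((b - θ) * y)) := by
        intro y
        have e1 : Real.exp (θ * x) * Real.exp ((a - θ) * y)
            = Real.exp (θ * (x - y)) * Real.exp (-(μ * y) / σ ^ 2) * Real.exp (y * Δ / σ ^ 2) := by
          rw [← Real.exp_add, ← Real.exp_add, ← Real.exp_add]
          congr 1
          rw [ha]; field_simp; ring
        have e2 : Real.exp (θ * x) * Real.exp ((b - θ) * y)
            = Real.exp (θ * (x - y)) * Real.exp (-(μ * y) / σ ^ 2)
              * Real.exp (-(y * Δ / σ ^ 2)) := by
          rw [← Real.exp_add, ← Real.exp_add, ← Real.exp_add]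
          congr 1
          rw [hb]; field_simp; ring
        rw [Real.sinh_eq]
        linear_combination (1 / Δ) * e2 - (1 / Δ) * e1
      have hint : (∫ y in (0:ℝ)..x, Real.exp (θ * (x - y)) *
          ((2 / Δ) * Real.exp (-(μ * y) / σ ^ 2) * Real.sinh (y * Δ / σ ^ 2)))
          = (1 / Δ) * (Real.exp (θ * x) * ((Real.exp ((a - θ) * x) - 1) / (a - θ))
            - Real.exp (θ * x) * ((Real.exp ((b - θ) * x) - 1) / (b - θ))) := by
        rw [intervalIntegral.integral_congr (g := fun y => (1 / Δ) *
          (Real.exp (θ * x) * Real.exp ((a - θ) * y)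
            - Real.exp (θ * x) * Real.exp ((b - θ) * y))) (fun y _ => hW y)]
        rw [intervalIntegral.integral_const_mul, intervalIntegral.integral_sub,
          intervalIntegral.integral_const_mul, intervalIntegral.integral_const_mul,
          integral_exp_mul' _ _ h1, integral_exp_mul' _ _ h2]
        · exact (Continuous.intervalIntegrable (by fun_prop) _ _)
        · exact (Continuous.intervalIntegrable (by fun_prop) _ _)
      rw [hint, hfac]
      have hmain : -(σ ^ 2 / 2) * (θ - a) * (θ - b) *
          ((1 / Δ) * (Real.exp (θ * x) * ((Real.exp ((a - θ) * x) - 1) / (a - θ))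
            - Real.exp (θ * x) * ((Real.exp ((b - θ) * x) - 1) / (b - θ))))
          = (σ ^ 2 / (2 * Δ)) * ((θ - b) * (Real.exp (θ * x) * (Real.exp ((a - θ) * x) - 1))
            - (θ - a) * (Real.exp (θ * x) * (Real.exp ((b - θ) * x) - 1))) := by
        field_simp
        ring
      rw [hmain]
      have ea : Real.exp (θ * x) * Real.exp ((a - θ) * x) = Real.exp (a * x) := by
        rw [← Real.exp_add]; ring_nf
      have eb : Real.exp (θ * x) * Real.exp ((b - θ) * x) = Real.exp (b * x) := by
        rw [← Real.exp_add]; ring_nf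
      linear_combination (σ ^ 2 / (2 * Δ)) * (θ - b) * ea
        - (σ ^ 2 / (2 * Δ)) * (θ - a) * eb - Real.exp (θ * x) * hab2

/-- For Brownian motion with drift, Z_δ(x,θ) = Z_δ(x) + θ(σ²/2)W_δ(x). -/
theorem bm_Z_affine_in_theta (μ σ δ : ℝ) (hσ : 0 < σ) (hδ : 0 ≤ δ)
    (hΔ : 0 < Real.sqrt (μ ^ 2 + 2 * δ * σ ^ 2)) :
    let Δ := Real.sqrt (μ ^ 2 + 2 * δ * σ ^ 2)
    let κ : ℝ → ℝ := fun θ => μ * θ + σ ^ 2 * θ ^ 2 / 2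
    let W : ℝ → ℝ := fun x => (2 / Δ) * Real.exp (-(μ * x) / σ ^ 2) * Real.sinh (x * Δ / σ ^ 2)
    let Z : ℝ → ℝ → ℝ := fun x θ =>
      Real.exp (θ * x) + (δ - κ θ) * ∫ y in (0 : ℝ)..x, Real.exp (θ * (x - y)) * W y
    ∀ x : ℝ, 0 ≤ x → ∀ θ : ℝ, Z x θ = Z x 0 + θ * (σ ^ 2 / 2) * W x := by
  intro Δ κ W Z x hx θ
  have hΔ2 : Δ ^ 2 = μ ^ 2 + 2 * δ * σ ^ 2 := by
    have h0 : 0 ≤ μ ^ 2 + 2 * δ * σ ^ 2 := by positivity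
    simp [Δ, Real.sq_sqrt h0]
  have hσ2 : (σ:ℝ) ^ 2 ≠ 0 := pow_ne_zero 2 hσ.ne'
  have h1 := bm_Z_closed_form μ σ δ hσ Δ hΔ hΔ2 x θ
  have h2 := bm_Z_closed_form μ σ δ hσ Δ hΔ hΔ2 x 0
  have hW : (2 / Δ) * Real.exp (-(μ * x) / σ ^ 2) * Real.sinh (x * Δ / σ ^ 2)
      = (1 / Δ) * (Real.exp ((Δ - μ) / σ ^ 2 * x) - Real.exp ((-Δ - μ) / σ ^ 2 * x)) := by
    have e1 : Real.exp ((Δ - μ) / σ ^ 2 * x)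
        = Real.exp (-(μ * x) / σ ^ 2) * Real.exp (x * Δ / σ ^ 2) := by
      rw [← Real.exp_add]; congr 1; field_simp; ring
    have e2 : Real.exp ((-Δ - μ) / σ ^ 2 * x)
        = Real.exp (-(μ * x) / σ ^ 2) * Real.exp (-(x * Δ / σ ^ 2)) := by
      rw [← Real.exp_add]; congr 1; field_simp; ring
    rw [Real.sinh_eq, e1, e2]; ring
  show Real.exp (θ * x) + (δ - (μ * θ + σ ^ 2 * θ ^ 2 / 2)) *
      (∫ y in (0:ℝ)..x, Real.exp (θ * (x - y)) *
        ((2 / Δ) * Real.exp (-(μ * y) / σ ^ 2) * Real.sinh (y * Δ / σ ^ 2)))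
      = (Real.exp (0 * x) + (δ - (μ * 0 + σ ^ 2 * 0 ^ 2 / 2)) *
        ∫ y in (0:ℝ)..x, Real.exp (0 * (x - y)) *
          ((2 / Δ) * Real.exp (-(μ * y) / σ ^ 2) * Real.sinh (y * Δ / σ ^ 2)))
        + θ * (σ ^ 2 / 2) * ((2 / Δ) * Real.exp (-(μ * x) / σ ^ 2) * Real.sinh (x * Δ / σ ^ 2))
  rw [h1, h2, hW]
  ring
end

section
/- Let c > 0, λ > 0, μ > 0 with κ'(0) = c − λ/μ > 0, set γ = μ − λ/c > 0 and ρ = λ/(cμ) ∈ (0,1), and let W(x) = (1/(c(1−ρ)))(1 − ρ e^{−γx}) be the zero scale function of the Cramér–Lundberg process with exponential claims. Define W̄(x) = ∫₀^x W and W^{*2}(x) = ∫₀^x W(x−y)W(y)dy. Then (κ''(0)/(2κ'(0))) W(x) + κ'(0) W^{*2}(x) − W̄(x) = (ρ/(c²γ)) e^{−γx} (λx + c) for all x ≥ 0, where κ''(0) = 2λ/μ². Moreover this function attains its maximum over [0,∞) at x* = (2 − 1/ρ)/γ when ρ > 1/2. -/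
open Real Set

/-!
The integrands of `W̄` and `W^{*2}` are combinations of `1`, `e^{-γy}`, `e^{-γ(x-y)}` and the
constant `e^{-γx} = e^{-γ(x-y)} e^{-γy}`, so both integrals come from explicit antiderivatives; the
closed form is then algebra, once everything is written through `λ = ρcμ` and `γ = μ(1 - ρ)`
(so that `κ'(0) = c(1 - ρ)`). The closed form is `C e^{-γx} (λx + c)` with `C > 0`, and at
`x* = (2 - 1/ρ)/γ` one has `λx* + c = λ/γ`; with `u = γ(x - x*)` the ratio of its values at `x`
and `x*` is `e^{-u} (1 + u) ≤ 1`.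
-/

theorem hasDerivAt_exp_neg_mul (γ y : ℝ) :
    HasDerivAt (fun y => exp (-(γ * y))) (-γ * exp (-(γ * y))) y := by
  simpa [mul_comm] using ((hasDerivAt_id y).const_mul γ).neg.exp

theorem integral_mul_one_sub_mul_exp_neg {γ : ℝ} (hγ : γ ≠ 0) (a ρ x : ℝ) :
    ∫ y in (0 : ℝ)..x, a * (1 - ρ * exp (-(γ * y))) =
      a * x + a * ρ / γ * (exp (-(γ * x)) - 1) := by
  have hderiv : ∀ y ∈ uIcc 0 x, HasDerivAt (fun y => a * y + a * ρ / γ * exp (-(γ * y)))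
      (a * (1 - ρ * exp (-(γ * y)))) y := fun y _ => by
    refine (((hasDerivAt_id y).const_mul a).add
      ((hasDerivAt_exp_neg_mul γ y).const_mul (a * ρ / γ))).congr_deriv ?_
    field_simp
    ring
  rw [intervalIntegral.integral_eq_sub_of_hasDerivAt hderiv
    (Continuous.intervalIntegrable (by fun_prop) _ _)]
  simp only [mul_zero, neg_zero, exp_zero]
  ring

theorem integral_mul_one_sub_mul_exp_neg_conv {γ : ℝ} (hγ : γ ≠ 0) (a ρ x : ℝ) :
    ∫ y in (0 : ℝ)..x, a * (1 - ρ * exp (-(γ * (x - y)))) * (a * (1 - ρ * exp (-(γ * y)))) =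
      a ^ 2 * ((1 + ρ ^ 2 * exp (-(γ * x))) * x - 2 * ρ / γ * (1 - exp (-(γ * x)))) := by
  have hderiv : ∀ y ∈ uIcc 0 x, HasDerivAt
      (fun y => a ^ 2 * ((1 + ρ ^ 2 * exp (-(γ * x))) * y
        - ρ / γ * exp (-(γ * (x - y))) + ρ / γ * exp (-(γ * y))))
      (a * (1 - ρ * exp (-(γ * (x - y)))) * (a * (1 - ρ * exp (-(γ * y))))) y := fun y _ => by
    have hrefl : HasDerivAt (fun y => exp (-(γ * (x - y)))) (γ * exp (-(γ * (x - y)))) y := by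
      simpa [mul_comm] using (((hasDerivAt_id y).const_sub x).const_mul γ).neg.exp
    refine (((((hasDerivAt_id y).const_mul (1 + ρ ^ 2 * exp (-(γ * x)))).sub
      (hrefl.const_mul (ρ / γ))).add ((hasDerivAt_exp_neg_mul γ y).const_mul (ρ / γ))).const_mul
      (a ^ 2)).congr_deriv ?_
    have hsplit : exp (-(γ * x)) = exp (-(γ * (x - y))) * exp (-(γ * y)) := by
      rw [← exp_add]; ring_nf
    rw [hsplit]
    field_simp
    ring
  rw [intervalIntegral.integral_eq_sub_of_hasDerivAt hderiv
    (Continuous.intervalIntegrable (by fun_prop) _ _)]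
  simp only [mul_zero, neg_zero, exp_zero, sub_zero, sub_self]
  ring

theorem exp_neg_mul_one_add_le_one (u : ℝ) : exp (-u) * (1 + u) ≤ 1 := by
  calc exp (-u) * (1 + u) ≤ exp (-u) * exp u := by
        gcongr; linarith [add_one_le_exp u]
    _ = 1 := by rw [← exp_add, neg_add_cancel, exp_zero]

theorem isMaxOn_mul_exp_neg_mul_mul_add {C a b γ x₀ : ℝ} (hC : 0 ≤ C) (ha : 0 ≤ a) (hγ : 0 < γ)
    (hx₀ : a * x₀ + b = a / γ) :
    IsMaxOn (fun z => C * exp (-(γ * z)) * (a * z + b)) univ x₀ := by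
  intro z _
  have hz : a * z + b = a / γ * (1 + γ * (z - x₀)) := by
    rw [show a * z + b = (a * x₀ + b) + a * (z - x₀) by ring, hx₀]
    field_simp
  have hexp : exp (-(γ * z)) = exp (-(γ * x₀)) * exp (-(γ * (z - x₀))) := by
    rw [← exp_add]; ring_nf
  have hle := exp_neg_mul_one_add_le_one (γ * (z - x₀))
  simp only [mem_ofPred_eq, hz, hexp, hx₀]
  calc C * (exp (-(γ * x₀)) * exp (-(γ * (z - x₀)))) * (a / γ * (1 + γ * (z - x₀)))
      = C * exp (-(γ * x₀)) * (a / γ) * (exp (-(γ * (z - x₀))) * (1 + γ * (z - x₀))) := by ring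
    _ ≤ C * exp (-(γ * x₀)) * (a / γ) * 1 := by gcongr
    _ = C * exp (-(γ * x₀)) * (a / γ) := mul_one _

/-- Conditional expected time to ruin for the Cramér–Lundberg model with exponential
claims, and its maximizer when ρ > 1/2. -/
theorem cl_conditional_ruin_time (c lam μ : ℝ) (hc : 0 < c) (hlam : 0 < lam) (hμ : 0 < μ)
    (hnet : 0 < c - lam / μ) :
    let γ := μ - lam / c
    let ρ := lam / (c * μ)
    let W : ℝ → ℝ := fun x => (1 / (c * (1 - ρ))) * (1 - ρ * Real.exp (-(γ * x)))
    let Wbar : ℝ → ℝ := fun x => ∫ y in (0 : ℝ)..x, W y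
    let Wconv2 : ℝ → ℝ := fun x => ∫ y in (0 : ℝ)..x, W (x - y) * W y
    let f : ℝ → ℝ := fun x =>
      (2 * lam / μ ^ 2) / (2 * (c - lam / μ)) * W x + (c - lam / μ) * Wconv2 x - Wbar x
    (∀ x : ℝ, 0 ≤ x → f x = ρ / (c ^ 2 * γ) * Real.exp (-(γ * x)) * (lam * x + c)) ∧
      (1 / 2 < ρ → IsMaxOn f (Set.Ici (0 : ℝ)) ((2 - 1 / ρ) / γ)) := by
  intro γ ρ W Wbar Wconv2 f
  have hcμ : lam < c * μ := by linarith [(div_lt_iff₀ hμ).mp (sub_pos.mp hnet)]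
  have hρ : 0 < ρ := by positivity
  have hρ1 : 0 < 1 - ρ := sub_pos.mpr ((div_lt_one (by positivity)).mpr hcμ)
  have hρ1_ne : 1 - ρ ≠ 0 := hρ1.ne'
  have hlam_eq : lam = ρ * (c * μ) := by simp only [ρ]; field_simp
  have hγ_eq : γ = μ * (1 - ρ) := by simp only [γ, ρ]; field_simp
  have hγ : 0 < γ := by rw [hγ_eq]; exact mul_pos hμ hρ1
  have hf : ∀ x, f x = ρ / (c ^ 2 * γ) * exp (-(γ * x)) * (lam * x + c) := fun x => by
    simp only [f, Wbar, Wconv2, W, integral_mul_one_sub_mul_exp_neg hγ.ne',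
      integral_mul_one_sub_mul_exp_neg_conv hγ.ne']
    rw [hγ_eq, hlam_eq]
    field_simp
    ring
  refine ⟨fun x _ => hf x, fun _ => ?_⟩
  rw [show f = _ from funext hf]
  refine (isMaxOn_mul_exp_neg_mul_mul_add (by positivity) hlam.le hγ ?_).on_subset (subset_univ _)
  rw [hγ_eq, hlam_eq]
  field_simp
  ring
end

section
/- Let μ > 0, σ > 0, δ > 0, Δ = √(μ² + 2δσ²), and W_δ(x) = (2/Δ) e^{−μx/σ²} sinh(xΔ/σ²). Then the equation W_δ(b)/W_δ'(b) = μ/δ has the unique positive solution b* = (σ²/Δ) log((Δ + μ)/(Δ − μ)), and W_δ' attains its global minimum on [0,∞) at b*. -/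
/-!
With `r = (Δ - μ)/σ² > 0 > s = -(Δ + μ)/σ²`, the two roots of `(σ²/2)θ² + μθ = δ`, the scale
function is `W = (e^{r x} - e^{s x})/Δ`. Hence `(σ²/2) W'' + μ W' = δ W` and `W' > 0`, so
`W / W' = μ / δ` holds exactly where `W'' = (r² e^{r x} - s² e^{s x})/Δ` vanishes. That function
changes sign once, from negative to positive, at `log (s²/r²)/(r - s) = b*`, which is therefore
the unique solution and the global minimiser of `W'`.
-/

open Real Set

noncomputable def expPair (A r B s x : ℝ) : ℝ := A * exp (r * x) + B * exp (s * x)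

section
variable (A r B s : ℝ)

theorem hasDerivAt_expPair (x : ℝ) :
    HasDerivAt (expPair A r B s) (expPair (A * r) r (B * s) s x) x := by
  have hexp (t : ℝ) : HasDerivAt (fun x => exp (t * x)) (exp (t * x) * t) x := by
    simpa using ((hasDerivAt_id x).const_mul t).exp
  exact (((hexp r).const_mul A).fun_add ((hexp s).const_mul B)).congr_deriv
    (by simp only [expPair]; ring)

theorem deriv_expPair : deriv (expPair A r B s) = expPair (A * r) r (B * s) s :=
  funext fun x => (hasDerivAt_expPair A r B s x).deriv

theorem differentiable_expPair : Differentiable ℝ (expPair A r B s) :=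
  fun x => (hasDerivAt_expPair A r B s x).differentiableAt

theorem expPair_ode {a b c : ℝ} (hr : a * r ^ 2 + b * r = c) (hs : a * s ^ 2 + b * s = c)
    (x : ℝ) :
    a * deriv (deriv (expPair A r B s)) x + b * deriv (expPair A r B s) x =
      c * expPair A r B s x := by
  simp only [deriv_expPair, expPair]
  linear_combination (A * exp (r * x)) * hr + (B * exp (s * x)) * hs

variable {A r B s}

theorem expPair_pos (hA : 0 < A) (hB : 0 < B) (x : ℝ) : 0 < expPair A r B s x := by
  unfold expPair; positivity

theorem expPair_factor (hA : A ≠ 0) (x : ℝ) :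
    expPair A r B s x = A * exp (s * x) * (exp ((r - s) * x) - -B / A) := by
  rw [expPair, sub_mul, exp_sub]; field_simp; ring

theorem expPair_nonpos_iff (hA : 0 < A) (hB : B < 0) (hsr : s < r) (x : ℝ) :
    expPair A r B s x ≤ 0 ↔ x ≤ log (-B / A) / (r - s) := by
  rw [expPair_factor hA.ne', ← mul_zero (A * exp (s * x)), mul_le_mul_iff_right₀ (by positivity),
    sub_nonpos, ← le_log_iff_exp_le (div_pos (neg_pos.2 hB) hA), le_div_iff₀ (sub_pos.2 hsr),
    mul_comm]

theorem expPair_nonneg_iff (hA : 0 < A) (hB : B < 0) (hsr : s < r) (x : ℝ) :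
    0 ≤ expPair A r B s x ↔ log (-B / A) / (r - s) ≤ x := by
  rw [expPair_factor hA.ne', mul_nonneg_iff_of_pos_left (by positivity),
    sub_nonneg, ← log_le_iff_le_exp (div_pos (neg_pos.2 hB) hA), div_le_iff₀ (sub_pos.2 hsr),
    mul_comm]

theorem expPair_eq_zero_iff (hA : 0 < A) (hB : B < 0) (hsr : s < r) (x : ℝ) :
    expPair A r B s x = 0 ↔ x = log (-B / A) / (r - s) := by
  rw [le_antisymm_iff, expPair_nonpos_iff hA hB hsr, expPair_nonneg_iff hA hB hsr,
    ← le_antisymm_iff]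

theorem isMinOn_expPair (hA : 0 < A * r) (hB : B * s < 0) (hsr : s < r) :
    IsMinOn (expPair A r B s) univ (log (-(B * s) / (A * r)) / (r - s)) := by
  have hd := differentiable_expPair A r B s
  refine isMinOn_univ_of_deriv hd.continuous.continuousAt hd.differentiableOn
    hd.differentiableOn (fun x hx => ?_) (fun x hx => ?_) <;> rw [deriv_expPair]
  · exact (expPair_nonpos_iff hA hB hsr x).2 (le_of_lt hx)
  · exact (expPair_nonneg_iff hA hB hsr x).2 (le_of_lt hx)

end

theorem div_deriv_eq_iff_deriv_deriv_eq_zero {f : ℝ → ℝ} {a b c x : ℝ} (ha : a ≠ 0) (hc : c ≠ 0)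
    (hf' : deriv f x ≠ 0) (hode : a * deriv (deriv f) x + b * deriv f x = c * f x) :
    f x / deriv f x = b / c ↔ deriv (deriv f) x = 0 := by
  rw [div_eq_div_iff hf' hc]
  constructor <;> intro h
  · have : a * deriv (deriv f) x = 0 := by linear_combination hode + h
    exact (mul_eq_zero.1 this).resolve_left ha
  · linear_combination a * h - hode

theorem scale_eq_expPair (μ σ Δ : ℝ) :
    (fun x => (2 / Δ) * exp (-(μ * x) / σ ^ 2) * sinh (x * Δ / σ ^ 2)) =
      expPair (1 / Δ) ((Δ - μ) / σ ^ 2) (-1 / Δ) (-(Δ + μ) / σ ^ 2) := funext fun x => by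
  have hrx : exp ((Δ - μ) / σ ^ 2 * x) = exp (-(μ * x) / σ ^ 2) * exp (x * Δ / σ ^ 2) := by
    rw [← exp_add]; ring_nf
  have hsx : exp (-(Δ + μ) / σ ^ 2 * x) = exp (-(μ * x) / σ ^ 2) * exp (-(x * Δ / σ ^ 2)) := by
    rw [← exp_add]; ring_nf
  simp only [expPair, sinh_eq, hrx, hsx]
  ring

/-- The optimal de Finetti dividend barrier for Brownian motion with positive drift. -/
theorem bm_optimal_barrier (μ σ δ : ℝ) (hμ : 0 < μ) (hσ : 0 < σ) (hδ : 0 < δ) :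
    let Δ := Real.sqrt (μ ^ 2 + 2 * δ * σ ^ 2)
    let W : ℝ → ℝ := fun x => (2 / Δ) * Real.exp (-(μ * x) / σ ^ 2) * Real.sinh (x * Δ / σ ^ 2)
    let b := (σ ^ 2 / Δ) * Real.log ((Δ + μ) / (Δ - μ))
    0 < b ∧ W b / deriv W b = μ / δ ∧
      (∀ b' : ℝ, 0 < b' → W b' / deriv W b' = μ / δ → b' = b) ∧
      IsMinOn (deriv W) (Set.Ici (0 : ℝ)) b := by
  intro Δ W b
  have hΔsq : Δ ^ 2 = μ ^ 2 + 2 * δ * σ ^ 2 := sq_sqrt (by positivity)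
  have hΔ : 0 < Δ := sqrt_pos.2 (by positivity)
  have hμΔ : μ < Δ := (lt_sqrt hμ.le).2 (lt_add_of_pos_right _ (by positivity))
  have hW : W = _ := scale_eq_expPair μ σ Δ
  set r := (Δ - μ) / σ ^ 2 with hr
  set s := -(Δ + μ) / σ ^ 2 with hs
  have hsr : s < r := by rw [hr, hs]; gcongr; linarith
  have hs0 : s < 0 := div_neg_of_neg_of_pos (by linarith) (by positivity)
  have hW'coeff : 0 < -1 / Δ * s :=
    mul_pos_of_neg_of_neg (div_neg_of_neg_of_pos (by norm_num) hΔ) hs0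
  have hW''coeff : -1 / Δ * s * s < 0 := mul_neg_of_pos_of_neg hW'coeff hs0
  have hode (x : ℝ) : σ ^ 2 / 2 * deriv (deriv W) x + μ * deriv W x = δ * W x := by
    rw [hW]
    refine expPair_ode _ _ _ _ ?_ ?_ x <;> simp only [hr, hs] <;> field_simp <;>
      linear_combination hΔsq
  have hb : b = log (-(-1 / Δ * s * s) / (1 / Δ * r * r)) / (r - s) := by
    have hq : -(-1 / Δ * s * s) / (1 / Δ * r * r) = ((Δ + μ) / (Δ - μ)) ^ 2 := by
      rw [hr, hs]; field_simp [sub_ne_zero.2 hμΔ.ne']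
    rw [hq, log_pow, Nat.cast_ofNat, show r - s = 2 * Δ / σ ^ 2 by rw [hr, hs]; ring]
    simp only [b]
    field_simp
  have hratio (x : ℝ) : W x / deriv W x = μ / δ ↔ x = b := by
    have hW' : deriv W x ≠ 0 := by
      rw [hW, deriv_expPair]
      exact (expPair_pos (by positivity) hW'coeff x).ne'
    rw [div_deriv_eq_iff_deriv_deriv_eq_zero (by positivity) hδ.ne' hW' (hode x), hW,
      deriv_expPair, deriv_expPair, expPair_eq_zero_iff (by positivity) hW''coeff hsr, hb]
  refine ⟨?_, (hratio b).2 rfl, fun b' _ h => (hratio b').1 h, ?_⟩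
  · exact mul_pos (by positivity) (log_pos ((one_lt_div (by linarith)).2 (by linarith)))
  · rw [hW, deriv_expPair, hb]
    exact (isMinOn_expPair (by positivity) hW''coeff hsr).on_subset (subset_univ _)
end
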